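/- arXiv:2208.11542 — 4 statements merged into one kernel-verified Lean document; each statement's English description precedes it below -/
import Mathlib

section
/- Let X be a compact convex subset of ℝ^d with vol(X) > 0 and let (x_j)_{j≥1} be independent random points in X where x_j has distribution P_j = α_j P_U + (1 − α_j) Q_j, with P_U the uniform distribution on X, Q_j arbitrary probability measures on X, and 0 ≤ α_j ≤ 1. If Σ_{j=1}^∞ α_j = ∞, then with probability 1, for every x ∈ X and every ε > 0 the sequence (x_j) falls into the set X ∩ B(x, ε) infinitely often; in particular the sequence of points is almost surely dense in X. -/
/-!
Since `∑ α_j = ∞` and a set `S ⊆ X` of positive volume has `P_j(S) ≥ α_j vol(S) / vol(X)`,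
the hitting probabilities of `S` have divergent sum, so by the second Borel–Cantelli lemma the
independent points hit `S` infinitely often almost surely. A convex set of positive volume has
nonempty interior, which is dense in it, so `X ∩ U` has positive volume for every open `U`
meeting `X`. Applying this to the countably many sets of a countable basis, one null set serves
for every ball `B(x, ε)` with `x ∈ X`.
-/

open MeasureTheory ProbabilityTheory Metric Filter Set
open scoped ENNReal

namespace Convex

variable {E : Type*} [NormedAddCommGroup E] [NormedSpace ℝ E] [MeasurableSpace E] [BorelSpace E]
  [FiniteDimensional ℝ E] {μ : Measure E} [μ.IsAddHaarMeasure] {s : Set E}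

theorem interior_nonempty_of_addHaar_pos (hs : Convex ℝ s) (hμ : 0 < μ s) :
    (interior s).Nonempty := by
  by_contra h
  have hfrontier : frontier s = closure s := by
    rw [frontier, Set.not_nonempty_iff_eq_empty.1 h, sdiff_empty]
  have : μ s = 0 :=
    measure_mono_null (subset_closure.trans hfrontier.ge) (hs.addHaar_frontier μ)
  exact hμ.ne' this

theorem addHaar_inter_pos_of_isOpen (hs : Convex ℝ s) (hμ : 0 < μ s) {U : Set E} (hU : IsOpen U)
    (hsU : (s ∩ U).Nonempty) : 0 < μ (s ∩ U) := by
  have hint := hs.interior_nonempty_of_addHaar_pos hμ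
  obtain ⟨y, hys, hyU⟩ := hsU
  have hy : y ∈ closure (interior s) := by
    rw [hs.closure_interior_eq_closure_of_nonempty_interior hint]
    exact subset_closure hys
  obtain ⟨w, hwU, hws⟩ := mem_closure_iff.1 hy U hU hyU
  calc 0 < μ (interior s ∩ U) := (isOpen_interior.inter hU).measure_pos μ ⟨w, hws, hwU⟩
    _ ≤ μ (s ∩ U) := measure_mono (inter_subset_inter_left U interior_subset)

end Convex

theorem tsum_ofReal_eq_top_of_tendsto_sum {α : ℕ → ℝ} (hα : ∀ j, 0 ≤ α j)
    (hdiv : Tendsto (fun n => ∑ j ∈ Finset.range n, α j) atTop atTop) :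
    ∑' j, ENNReal.ofReal (α j) = ∞ := by
  by_contra h
  have hsum : Summable α := by
    simpa only [ENNReal.toReal_ofReal (hα _)] using ENNReal.summable_toReal h
  exact (not_summable_iff_tendsto_nat_atTop_of_nonneg hα).2 hdiv hsum

namespace ProbabilityTheory

variable {E Ω : Type*} [MeasurableSpace E] {mΩ : MeasurableSpace Ω} {P : Measure Ω}
  {x : ℕ → Ω → E} {S : Set E}

theorem iIndepFun.ae_frequently_mem_of_tsum_eq_top [IsProbabilityMeasure P]
    (hindep : iIndepFun x P) (hmeas : ∀ j, Measurable (x j)) (hS : MeasurableSet S)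
    (hsum : ∑' j, P (x j ⁻¹' S) = ∞) :
    ∀ᵐ ω ∂P, ∃ᶠ j in atTop, x j ω ∈ S := by
  have hA : ∀ j, MeasurableSet (x j ⁻¹' S) := fun j => hmeas j hS
  have hindepA : iIndepSet (fun j => x j ⁻¹' S) P :=
    (iIndepSet_iff_meas_biInter hA).2 fun J =>
      hindep.measure_inter_preimage_eq_mul J fun _ _ => hS
  have hlimsup := measure_limsup_eq_one hA hindepA hsum
  have : ∀ᵐ ω ∂P, ω ∈ limsup (fun j => x j ⁻¹' S) atTop :=
    (prob_compl_eq_zero_iff (.measurableSet_limsup hA)).2 hlimsup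
  filter_upwards [this] with ω hω
  exact mem_limsup_iff_frequently_mem.1 hω

theorem tsum_measure_preimage_eq_top_of_smul_le_map (hmeas : ∀ j, Measurable (x j))
    {α : ℕ → ℝ} (hα : ∀ j, 0 ≤ α j)
    (hdiv : Tendsto (fun n => ∑ j ∈ Finset.range n, α j) atTop atTop)
    {ν : Measure E} (hle : ∀ j, ENNReal.ofReal (α j) • ν ≤ P.map (x j))
    (hS : MeasurableSet S) (hνS : ν S ≠ 0) :
    ∑' j, P (x j ⁻¹' S) = ∞ := by
  have hlower : ∀ j, ENNReal.ofReal (α j) * ν S ≤ P (x j ⁻¹' S) := fun j => by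
    rw [← Measure.map_apply (hmeas j) hS]
    exact hle j S
  refine eq_top_iff.2 ?_
  calc ∞ = (∑' j, ENNReal.ofReal (α j)) * ν S := by
        rw [tsum_ofReal_eq_top_of_tendsto_sum hα hdiv, ENNReal.top_mul hνS]
    _ = ∑' j, ENNReal.ofReal (α j) * ν S := ENNReal.tsum_mul_right.symm
    _ ≤ ∑' j, P (x j ⁻¹' S) := ENNReal.tsum_le_tsum hlower

end ProbabilityTheory

theorem grs_mixture_dense_general
    {d : ℕ} (X : Set (EuclideanSpace ℝ (Fin d)))
    (hXc : IsCompact X) (hXconv : Convex ℝ X) (hXvol : 0 < volume X)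
    {Ω : Type*} {mΩ : MeasurableSpace Ω} (P : Measure Ω) [IsProbabilityMeasure P]
    (x : ℕ → Ω → EuclideanSpace ℝ (Fin d)) (hmeas : ∀ j, Measurable (x j))
    (hindep : iIndepFun (m := fun _ : ℕ => (inferInstance : MeasurableSpace (EuclideanSpace ℝ (Fin d)))) x P)
    (α : ℕ → ℝ) (hα : ∀ j, 0 ≤ α j ∧ α j ≤ 1)
    (Q : ℕ → Measure (EuclideanSpace ℝ (Fin d)))
    (hlaw : ∀ j, Measure.map (x j) P =
      ENNReal.ofReal (α j) • ((volume X)⁻¹ • volume.restrict X)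
        + ENNReal.ofReal (1 - α j) • Q j)
    (hdiv : Tendsto (fun n => ∑ j ∈ Finset.range n, α j) atTop atTop) :
    ∀ᵐ ω ∂P, ∀ y ∈ X, ∀ ε > (0 : ℝ),
      ∃ᶠ j in atTop, x j ω ∈ X ∩ closedBall y ε := by
  have hle : ∀ j,
      ENNReal.ofReal (α j) • ((volume X)⁻¹ • volume.restrict X) ≤ P.map (x j) :=
    fun j => hlaw j ▸ Measure.le_add_right le_rfl
  have hvisit : ∀ U, IsOpen U → (X ∩ U).Nonempty →
      ∀ᵐ ω ∂P, ∃ᶠ j in atTop, x j ω ∈ X ∩ U := by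
    intro U hU hXU
    have hS : MeasurableSet (X ∩ U) := hXc.isClosed.measurableSet.inter hU.measurableSet
    have hpos : ((volume X)⁻¹ • volume.restrict X) (X ∩ U) ≠ 0 := by
      rw [Measure.smul_apply, Measure.restrict_eq_self _ inter_subset_left, smul_eq_mul]
      exact mul_ne_zero (ENNReal.inv_ne_zero.2 hXc.measure_lt_top.ne)
        (hXconv.addHaar_inter_pos_of_isOpen hXvol hU hXU).ne'
    exact hindep.ae_frequently_mem_of_tsum_eq_top hmeas hS
      (tsum_measure_preimage_eq_top_of_smul_le_map hmeas (fun j => (hα j).1) hdiv hle hS hpos)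
  obtain ⟨B, hBc, -, hB⟩ := TopologicalSpace.exists_countable_basis (EuclideanSpace ℝ (Fin d))
  have hbasis :
      ∀ᵐ ω ∂P, ∀ U ∈ {U ∈ B | (X ∩ U).Nonempty}, ∃ᶠ j in atTop, x j ω ∈ X ∩ U :=
    (ae_ball_iff (hBc.mono (sep_subset _ _))).2 fun U hU => hvisit U (hB.isOpen hU.1) hU.2
  filter_upwards [hbasis] with ω hω y hy ε hε
  obtain ⟨U, hUB, hyU, hUε⟩ := hB.mem_nhds_iff.1 (closedBall_mem_nhds y hε)
  exact (hω U ⟨hUB, y, hy, hyU⟩).mono fun j hj => ⟨hj.1, hUε hj.2⟩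

/-- **Convergence of GRS with the mixture sampling scheme.**
If independent points `x j` are sampled from `P_j = α_j P_U + (1-α_j) Q_j`,
where `P_U` is the uniform distribution on a compact convex body `X` and
`∑ α_j = ∞`, then with probability 1 the sequence visits every set
`X ∩ B(x, ε)` (`x ∈ X`, `ε > 0`) infinitely often; in particular it is
almost surely dense in `X`. -/
theorem grs_mixture_dense
    {d : ℕ} (X : Set (EuclideanSpace ℝ (Fin d)))
    (hXc : IsCompact X) (hXconv : Convex ℝ X) (hXvol : 0 < volume X)
    {Ω : Type*} {mΩ : MeasurableSpace Ω} (P : Measure Ω) [IsProbabilityMeasure P]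
    (x : ℕ → Ω → EuclideanSpace ℝ (Fin d)) (hmeas : ∀ j, Measurable (x j))
    (hindep : iIndepFun (m := fun _ : ℕ => (inferInstance : MeasurableSpace (EuclideanSpace ℝ (Fin d)))) x P)
    (α : ℕ → ℝ) (hα : ∀ j, 0 ≤ α j ∧ α j ≤ 1)
    (Q : ℕ → Measure (EuclideanSpace ℝ (Fin d)))
    (hQprob : ∀ j, IsProbabilityMeasure (Q j)) (hQsupp : ∀ j, Q j Xᶜ = 0)
    (hlaw : ∀ j, Measure.map (x j) P =
      ENNReal.ofReal (α j) • ((volume X)⁻¹ • volume.restrict X)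
        + ENNReal.ofReal (1 - α j) • Q j)
    (hdiv : Tendsto (fun n => ∑ j ∈ Finset.range n, α j) atTop atTop) :
    ∀ᵐ ω ∂P, ∀ y ∈ X, ∀ ε > (0 : ℝ),
      ∃ᶠ j in atTop, x j ω ∈ X ∩ closedBall y ε :=
  grs_mixture_dense_general X hXc hXconv hXvol (mΩ := mΩ) P x hmeas hindep α hα Q hlaw hdiv
end

section
/- Let X ⊂ ℝ^d be a compact convex set with vol(X) = 1, let x_1, x_2, … be i.i.d. random points uniformly distributed on X, let X_n = {x_1, …, x_n}, and let U be uniformly distributed on X independently of the x_j. Let ρ(U, X_n) = min_{1≤j≤n} ‖U − x_j‖ (Euclidean norm) and define F_n(t) = Pr( n^{1/d} V_d^{1/d} ρ(U, X_n) ≤ t ), where V_d = π^{d/2}/Γ(d/2 + 1) is the volume of the unit Euclidean ball. Then F_n(t) → F(t) := 1 − exp(−t^d) as n → ∞, uniformly in t ≥ 0. -/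
/-!
Given `U = x`, the points `x_1, …, x_n` independently avoid the ball `B(x, s)`, each with
probability `1 - μ(B(x, s))`, so `P(ρ(U, X_n) > s) = ∫ (1 - μ(B(x, s)))^n dμ(x)`.
At the scale `s = t (n V_d)^{-1/d}` the ball around an interior point of `X` eventually lies
inside `X` and has volume `t^d / n`, so the integrand tends to `exp(-t^d)`; the boundary of a
convex body is null, and dominated convergence gives `F_n(t) → F(t)` for each `t`.
Uniformity is Pólya's theorem: monotone functions converging pointwise to a continuous monotone
limit that tends to their common upper bound converge uniformly.
-/

open MeasureTheory ProbabilityTheory Filter Set Metric Topology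
open scoped ENNReal

lemma abs_sub_lt_two_mul_of_sandwich {x y x₁ x₂ y₁ y₂ ε : ℝ} (hx₁ : x₁ ≤ x) (hx₂ : x ≤ x₂)
    (hy₁ : y₁ ≤ y) (hy₂ : y ≤ y₂) (h₁ : |x₁ - y₁| < ε) (h₂ : |x₂ - y₂| < ε) (hy : y₂ - y₁ < ε) :
    |x - y| < 2 * ε := by
  rw [abs_lt] at *
  constructor <;> linarith

lemma add_floor_div_mul_le_and_lt {a t h : ℝ} (hh : 0 < h) (ht : a ≤ t) :
    a + ⌊(t - a) / h⌋₊ * h ≤ t ∧ t < a + (⌊(t - a) / h⌋₊ + 1) * h := by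
  have hq : 0 ≤ (t - a) / h := div_nonneg (sub_nonneg.2 ht) hh.le
  constructor
  · have := (le_div_iff₀ hh).1 (Nat.floor_le hq)
    linarith
  · have := (div_lt_iff₀ hh).1 (Nat.lt_floor_add_one ((t - a) / h))
    linarith

lemma exists_finset_bracket {f : ℝ → ℝ} {a L ε : ℝ} (hε : 0 < ε) (hfc : ContinuousOn f (Ici a))
    (hf : MonotoneOn f (Ici a)) (hfL : Tendsto f atTop (𝓝 L)) :
    ∃ S : Finset ℝ, ↑S ⊆ Ici a ∧ ∀ t ∈ Ici a, ∃ p ∈ S, p ≤ t ∧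
      ((∃ q ∈ S, t ≤ q ∧ f q - f p < ε) ∨ L - f p < ε) := by
  obtain ⟨T, hTL, haT⟩ :=
    ((hfL.eventually (lt_mem_nhds (sub_lt_self L hε))).and (eventually_ge_atTop a)).exists
  obtain ⟨δ, hδ, hfδ⟩ := Metric.uniformContinuousOn_iff.1
    (isCompact_Icc.uniformContinuousOn_of_continuous
      (hfc.mono (Icc_subset_Ici_self : Icc a (T + 1) ⊆ Ici a))) ε hε
  set h := min (δ / 2) 1
  have hh : 0 < h := by positivity
  set N := ⌈(T - a) / h⌉₊
  set g : ℕ → ℝ := fun k => a + k * h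
  have hg_mono : Monotone g := fun k m hkm => by simp only [g]; gcongr
  have hag : ∀ k, a ≤ g k := fun k => le_add_of_nonneg_right (by positivity)
  have hTg : T ≤ g N := by
    have := (div_le_iff₀ hh).1 (Nat.le_ceil ((T - a) / h))
    simp only [g]
    linarith
  have hgT : g N ≤ T + 1 := by
    have := mul_lt_mul_of_pos_right
      (Nat.ceil_lt_add_one (div_nonneg (sub_nonneg.2 haT) hh.le)) hh
    rw [add_mul, div_mul_cancel₀ _ hh.ne'] at this
    simp only [g]
    linarith [min_le_right (δ / 2) 1]
  have hgS : ∀ k ≤ N, g k ∈ (Finset.range (N + 1)).image g := fun k hk =>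
    Finset.mem_image_of_mem g (Finset.mem_range.2 (Nat.lt_succ_of_le hk))
  refine ⟨(Finset.range (N + 1)).image g, ?_, fun t ht => ?_⟩
  · simp only [Finset.coe_image, image_subset_iff]
    exact fun k _ => hag k
  obtain ⟨hkt, htk⟩ := add_floor_div_mul_le_and_lt hh ht
  set k := ⌊(t - a) / h⌋₊
  rcases lt_or_ge k N with hkN | hNk
  · refine ⟨g k, hgS k hkN.le, hkt, .inl ⟨g (k + 1), hgS (k + 1) hkN, ?_, ?_⟩⟩
    · simpa [g] using htk.le
    have hdist : dist (g (k + 1)) (g k) < δ := by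
      rw [Real.dist_eq, abs_lt]
      constructor <;> simp only [g] <;> push_cast <;> linarith [min_le_left (δ / 2) 1]
    exact (abs_lt.1 (hfδ _ ⟨hag _, (hg_mono hkN).trans hgT⟩ _
      ⟨hag _, (hg_mono hkN.le).trans hgT⟩ hdist)).2
  · refine ⟨g N, hgS N le_rfl, (hg_mono hNk).trans hkt, .inr ?_⟩
    linarith [hf haT (hag N) hTg]

/-- Pólya's theorem, on a half-line. -/
theorem tendstoUniformlyOn_Ici_of_monotoneOn {ι : Type*} {l : Filter ι} {F : ι → ℝ → ℝ}
    {f : ℝ → ℝ} {a L : ℝ} (hF : ∀ i, MonotoneOn (F i) (Ici a))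
    (hFL : ∀ i, ∀ t ∈ Ici a, F i t ≤ L) (hfc : ContinuousOn f (Ici a))
    (hf : MonotoneOn f (Ici a)) (hfL : Tendsto f atTop (𝓝 L))
    (hlim : ∀ t ∈ Ici a, Tendsto (fun i => F i t) l (𝓝 (f t))) :
    TendstoUniformlyOn F f l (Ici a) := by
  rw [Metric.tendstoUniformlyOn_iff]
  intro ε hε
  obtain ⟨S, hSa, hS⟩ := exists_finset_bracket (half_pos hε) hfc hf hfL
  have hfL' : ∀ t ∈ Ici a, f t ≤ L := fun t ht =>
    ge_of_tendsto hfL (eventually_atTop.2 ⟨t, fun u hu => hf ht (mem_Ici.2 (ht.trans hu)) hu⟩)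
  have hSlim : ∀ᶠ i in l, ∀ p ∈ S, |F i p - f p| < ε / 2 := (eventually_all_finset S).2
    fun p hp => (hlim p (hSa hp)).eventually (Metric.ball_mem_nhds _ (half_pos hε))
  filter_upwards [hSlim] with i hi t ht
  rw [dist_comm, Real.dist_eq, ← mul_div_cancel₀ ε two_ne_zero]
  obtain ⟨p, hpS, hpt, ⟨q, hqS, htq, hfpq⟩ | hpL⟩ := hS t ht
  · exact abs_sub_lt_two_mul_of_sandwich (hF i (hSa hpS) ht hpt) (hF i ht (hSa hqS) htq)
      (hf (hSa hpS) ht hpt) (hf ht (hSa hqS) htq) (hi p hpS) (hi q hqS) hfpq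
  · exact abs_sub_lt_two_mul_of_sandwich (hF i (hSa hpS) ht hpt) (hFL i t ht)
      (hf (hSa hpS) ht hpt) (hfL' t ht) (hi p hpS) (by simpa using half_pos hε) hpL

lemma tendsto_lintegral_one_sub_pow {α : Type*} [MeasurableSpace α] {μ : Measure α}
    [IsFiniteMeasure μ] {p : ℕ → α → ℝ≥0∞} (hp : ∀ n, Measurable (p n)) (hp1 : ∀ n x, p n x ≤ 1)
    {a : ℝ} (hlim : ∀ᵐ x ∂μ, Tendsto (fun n => n * (p n x).toReal) atTop (𝓝 a)) :
    Tendsto (fun n => ∫⁻ x, (1 - p n x) ^ n ∂μ) atTop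
      (𝓝 (ENNReal.ofReal (Real.exp (-a)) * μ univ)) := by
  rw [← lintegral_const]
  refine tendsto_lintegral_of_dominated_convergence (fun _ => 1)
    (fun n => (measurable_const.sub (hp n)).pow_const n)
    (fun n => .of_forall fun x => pow_le_one' tsub_le_self n) (by simp) ?_
  filter_upwards [hlim] with x hx
  have hexp : Tendsto (fun n => (1 + -(p n x).toReal) ^ n) atTop (𝓝 (Real.exp (-a))) :=
    Real.tendsto_one_add_pow_exp_of_tendsto (by simpa only [mul_neg] using hx.neg)
  refine ((ENNReal.continuous_ofReal.tendsto _).comp hexp).congr fun n => ?_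
  have hpx : (p n x).toReal ≤ 1 :=
    ENNReal.toReal_le_of_le_ofReal zero_le_one (by simpa using hp1 n x)
  rw [Function.comp_apply, ← sub_eq_add_neg, ENNReal.ofReal_pow (sub_nonneg.2 hpx),
    ENNReal.ofReal_sub _ ENNReal.toReal_nonneg, ENNReal.ofReal_one,
    ENNReal.ofReal_toReal (ne_top_of_le_ne_top ENNReal.one_ne_top (hp1 n x))]

lemma lt_iInf_dist_iff {E ι : Type*} [PseudoMetricSpace E] [Finite ι] [Nonempty ι] {x : E}
    {y : ι → E} {s : ℝ} :
    s < ⨅ i, dist x (y i) ↔ ∀ i, y i ∉ closedBall x s := by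
  simp only [mem_closedBall', not_le]
  refine ⟨fun h i => h.trans_le (ciInf_le (finite_range _).bddBelow i), fun h => ?_⟩
  obtain ⟨i, hi⟩ := exists_eq_ciInf_of_finite (f := fun i => dist x (y i))
  exact hi ▸ h i

section

variable {E : Type*} [PseudoMetricSpace E] [MeasurableSpace E] [OpensMeasurableSpace E]
  [SecondCountableTopology E]

lemma measurable_measure_closedBall (μ : Measure E) [SFinite μ] (r : ℝ) :
    Measurable fun x => μ (closedBall x r) :=
  measurable_measure_prodMk_left
    (measurableSet_le (continuous_snd.dist continuous_fst).measurable measurable_const)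

lemma measurableSet_lt_iInf_dist (n : ℕ) (s : ℝ) :
    MeasurableSet {y : Fin (n + 1) → E | s < ⨅ j : Fin n, dist (y 0) (y j.succ)} :=
  measurableSet_lt measurable_const
    (.iInf fun j => (measurable_pi_apply 0).dist (measurable_pi_apply j.succ))

lemma measure_pi_lt_iInf_dist (μ : Measure E) [SigmaFinite μ] {n : ℕ} (hn : n ≠ 0) (s : ℝ) :
    Measure.pi (fun _ : Fin (n + 1) => μ) {y | s < ⨅ j : Fin n, dist (y 0) (y j.succ)} =
      ∫⁻ x, μ (closedBall x s)ᶜ ^ n ∂μ := by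
  have : Nonempty (Fin n) := ⟨⟨0, Nat.pos_of_ne_zero hn⟩⟩
  set G : Set (E × (Fin n → E)) := {p | ∀ j, p.2 j ∈ (closedBall p.1 s)ᶜ}
  have hG : MeasurableSet G := by
    simp only [G, ofPred_forall, mem_compl_iff, mem_closedBall', not_le]
    exact .iInter fun j => measurableSet_lt measurable_const
      (measurable_fst.dist ((measurable_pi_apply j).comp measurable_snd))
  have hpre : {y : Fin (n + 1) → E | s < ⨅ j : Fin n, dist (y 0) (y j.succ)} =
      MeasurableEquiv.piFinSuccAbove (fun _ => E) 0 ⁻¹' G := by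
    ext y
    simp [G, lt_iInf_dist_iff, Fin.tail]
  rw [hpre, (measurePreserving_piFinSuccAbove (fun _ => μ) 0).measure_preimage_equiv,
    Measure.prod_apply hG]
  refine lintegral_congr fun x => ?_
  have hfiber : Prod.mk x ⁻¹' G = univ.pi fun _ => (closedBall x s)ᶜ := by ext; simp [G]
  rw [hfiber, Measure.pi_pi, Finset.prod_const, Finset.card_univ, Fintype.card_fin]

lemma tendsto_lintegral_measure_compl_closedBall_pow {ν : Measure E} {X : Set E}
    (hX : ν X = 1) (hfr : ν (frontier X) = 0) {r : ℕ → ℝ} (hr : Tendsto r atTop (𝓝 0)) {a : ℝ}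
    (hball : ∀ x, Tendsto (fun n => n * (ν (closedBall x (r n))).toReal) atTop (𝓝 a)) :
    Tendsto (fun n => ∫⁻ x, ν.restrict X (closedBall x (r n))ᶜ ^ n ∂ν.restrict X) atTop
      (𝓝 (ENNReal.ofReal (Real.exp (-a)))) := by
  have : IsProbabilityMeasure (ν.restrict X) := ⟨by simpa using hX⟩
  have hint : ∀ᵐ x ∂ν.restrict X, x ∈ interior X := by
    rw [ae_restrict_iff (p := (· ∈ interior X)) isOpen_interior.measurableSet]
    filter_upwards [measure_eq_zero_iff_ae_notMem.1 hfr] with x hfx hxX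
    by_contra hx
    exact hfx ⟨subset_closure hxX, hx⟩
  simp_rw [prob_compl_eq_one_sub measurableSet_closedBall]
  simpa using tendsto_lintegral_one_sub_pow (μ := ν.restrict X)
    (fun n => measurable_measure_closedBall _ (r n)) (fun n x => prob_le_one) <| by
      filter_upwards [hint] with x hx
      refine (hball x).congr' ?_
      filter_upwards [hr.eventually (eventually_closedBall_subset (isOpen_interior.mem_nhds hx))]
        with n hn
      rw [Measure.restrict_apply measurableSet_closedBall,
        inter_eq_left.2 (hn.trans interior_subset)]

variable {Ω : Type*} {mΩ : MeasurableSpace Ω} {P : Measure Ω} [IsProbabilityMeasure P]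
  {z : ℕ → Ω → E} {μ : Measure E}

lemma measure_lt_iInf_dist_eq_lintegral (hmeas : ∀ j, Measurable (z j)) (hindep : iIndepFun z P)
    (hlaw : ∀ j, P.map (z j) = μ) {n : ℕ} (hn : n ≠ 0) (s : ℝ) :
    P {ω | s < ⨅ j : Fin n, dist (z 0 ω) (z ((j : ℕ) + 1) ω)} =
      ∫⁻ x, μ (closedBall x s)ᶜ ^ n ∂μ := by
  have : IsProbabilityMeasure μ :=
    hlaw 0 ▸ Measure.isProbabilityMeasure_map (hmeas 0).aemeasurable
  have hvec : P.map (fun ω (i : Fin (n + 1)) => z i ω) = Measure.pi fun _ => μ := by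
    rw [(hindep.precomp Fin.val_injective).map_fun_eq_pi_map (f := fun i : Fin (n + 1) => z i)
      fun i => (hmeas i).aemeasurable]
    simp [hlaw]
  rw [← measure_pi_lt_iInf_dist μ hn, ← hvec,
    Measure.map_apply (f := fun ω (i : Fin (n + 1)) => z i ω)
      (measurable_pi_lambda _ fun i => hmeas i) (measurableSet_lt_iInf_dist n s)]
  rfl

lemma toReal_measure_iInf_dist_le (hmeas : ∀ j, Measurable (z j)) (hindep : iIndepFun z P)
    (hlaw : ∀ j, P.map (z j) = μ) {n : ℕ} (hn : n ≠ 0) (s : ℝ) :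
    (P {ω | ⨅ j : Fin n, dist (z 0 ω) (z ((j : ℕ) + 1) ω) ≤ s}).toReal =
      1 - (∫⁻ x, μ (closedBall x s)ᶜ ^ n ∂μ).toReal := by
  have hm : MeasurableSet {ω | s < ⨅ j : Fin n, dist (z 0 ω) (z ((j : ℕ) + 1) ω)} :=
    measurableSet_lt measurable_const (.iInf fun j => (hmeas 0).dist (hmeas _))
  rw [← measure_lt_iInf_dist_eq_lintegral hmeas hindep hlaw hn, ← measureReal_def,
    ← measureReal_def, ← probReal_compl_eq_one_sub hm]
  congr 1
  ext ω
  simp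

end

noncomputable def unitBallVolume (d : ℕ) : ℝ :=
  Real.pi ^ ((d : ℝ) / 2) / Real.Gamma ((d : ℝ) / 2 + 1)

lemma unitBallVolume_pos (d : ℕ) : 0 < unitBallVolume d := by
  unfold unitBallVolume
  positivity

lemma EuclideanSpace.volume_closedBall_eq_unitBallVolume {d : ℕ} (hd : d ≠ 0)
    (x : EuclideanSpace ℝ (Fin d)) {r : ℝ} (hr : 0 ≤ r) :
    volume (closedBall x r) = ENNReal.ofReal (unitBallVolume d * r ^ d) := by
  have : Nonempty (Fin d) := ⟨⟨0, Nat.pos_of_ne_zero hd⟩⟩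
  rw [EuclideanSpace.volume_closedBall, Fintype.card_fin, ← ENNReal.ofReal_pow hr,
    ← ENNReal.ofReal_mul (by positivity), mul_comm, unitBallVolume, Real.sqrt_eq_rpow,
    ← Real.rpow_natCast, ← Real.rpow_mul Real.pi_pos.le]
  ring_nf

lemma tendsto_lintegral_compl_closedBall_pow_of_convex {d : ℕ} (hd : d ≠ 0)
    {X : Set (EuclideanSpace ℝ (Fin d))} (hXconv : Convex ℝ X) (hXvol : volume X = 1) {t : ℝ}
    (ht : 0 ≤ t) :
    Tendsto (fun n : ℕ => ∫⁻ x, volume.restrict X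
        (closedBall x (t / (n * unitBallVolume d) ^ ((1 : ℝ) / d)))ᶜ ^ n ∂volume.restrict X)
      atTop (𝓝 (ENNReal.ofReal (Real.exp (-(t ^ d))))) := by
  have hV := unitBallVolume_pos d
  have hr : Tendsto (fun n : ℕ => t / (n * unitBallVolume d) ^ ((1 : ℝ) / d)) atTop (𝓝 0) :=
    tendsto_const_nhds.div_atTop ((tendsto_rpow_atTop (by positivity)).comp
      (tendsto_natCast_atTop_atTop.atTop_mul_const hV))
  refine tendsto_lintegral_measure_compl_closedBall_pow hXvol (hXconv.addHaar_frontier volume)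
    hr fun x => ?_
  refine tendsto_const_nhds.congr' ?_
  filter_upwards [eventually_ne_atTop 0] with n hn
  have hnV : 0 < n * unitBallVolume d := mul_pos (Nat.cast_pos.2 (Nat.pos_of_ne_zero hn)) hV
  rw [EuclideanSpace.volume_closedBall_eq_unitBallVolume hd x (by positivity),
    ENNReal.toReal_ofReal (by positivity), div_pow, one_div,
    Real.rpow_inv_natCast_pow hnV.le hd]
  field_simp

lemma tendsto_toReal_measure_scaled_iInf_dist_le {d : ℕ} (hd : d ≠ 0)
    {X : Set (EuclideanSpace ℝ (Fin d))} (hXconv : Convex ℝ X) (hXvol : volume X = 1)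
    {Ω : Type*} {mΩ : MeasurableSpace Ω}
    {P : Measure Ω} [IsProbabilityMeasure P] {z : ℕ → Ω → EuclideanSpace ℝ (Fin d)}
    (hmeas : ∀ j, Measurable (z j)) (hindep : iIndepFun z P)
    (hlaw : ∀ j, P.map (z j) = volume.restrict X) {t : ℝ} (ht : 0 ≤ t) :
    Tendsto (fun n : ℕ => (P {ω | (n : ℝ) ^ ((1 : ℝ) / d) * unitBallVolume d ^ ((1 : ℝ) / d) *
        (⨅ j : Fin n, dist (z 0 ω) (z ((j : ℕ) + 1) ω)) ≤ t}).toReal)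
      atTop (𝓝 (1 - Real.exp (-(t ^ d)))) := by
  have hI := (ENNReal.tendsto_toReal ENNReal.ofReal_ne_top).comp
    (tendsto_lintegral_compl_closedBall_pow_of_convex hd hXconv hXvol ht)
  rw [ENNReal.toReal_ofReal (Real.exp_pos _).le] at hI
  refine (tendsto_const_nhds.sub hI).congr' ?_
  filter_upwards [eventually_ne_atTop 0] with n hn
  have hnV : 0 < n * unitBallVolume d :=
    mul_pos (Nat.cast_pos.2 (Nat.pos_of_ne_zero hn)) (unitBallVolume_pos d)
  rw [← Real.mul_rpow n.cast_nonneg (unitBallVolume_pos d).le]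
  simp_rw [← le_div_iff₀' (Real.rpow_pos_of_pos hnV _)]
  rw [toReal_measure_iInf_dist_le hmeas hindep hlaw hn]
  rfl

theorem normalized_nearest_distance_tendsto_weibull_general
    {d : ℕ} (hd : 0 < d)
    (X : Set (EuclideanSpace ℝ (Fin d)))
    (hXconv : Convex ℝ X) (hXvol : volume X = 1)
    {Ω : Type*} {mΩ : MeasurableSpace Ω} (P : Measure Ω) [IsProbabilityMeasure P]
    (z : ℕ → Ω → EuclideanSpace ℝ (Fin d)) (hmeas : ∀ j, Measurable (z j))
    (hindep : iIndepFun z P)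
    (hlaw : ∀ j, Measure.map (z j) P = volume.restrict X)
    (Vd : ℝ) (hVd : Vd = Real.pi ^ ((d : ℝ) / 2) / Real.Gamma ((d : ℝ) / 2 + 1)) :
    TendstoUniformlyOn
      (fun (n : ℕ) (t : ℝ) =>
        (P {ω | (n : ℝ) ^ ((1 : ℝ) / d) * Vd ^ ((1 : ℝ) / d) *
            (⨅ j : Fin n, dist (z 0 ω) (z ((j : ℕ) + 1) ω)) ≤ t}).toReal)
      (fun t => 1 - Real.exp (-(t ^ d)))
      atTop (Set.Ici 0) := by
  obtain rfl : Vd = unitBallVolume d := hVd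
  refine tendstoUniformlyOn_Ici_of_monotoneOn (L := 1)
    (fun n t₁ _ t₂ _ h => ENNReal.toReal_mono (measure_ne_top _ _)
      (measure_mono fun ω hω => le_trans hω h))
    (fun n t _ => measureReal_le_one) (by fun_prop) (fun x hx y _ hxy => ?_) ?_
    fun t ht => tendsto_toReal_measure_scaled_iInf_dist_le hd.ne' hXconv hXvol hmeas hindep hlaw ht
  · gcongr
  · simpa using tendsto_const_nhds.sub
      (Real.tendsto_exp_atBot.comp (tendsto_neg_atTop_atBot.comp (tendsto_pow_atTop hd.ne')))

/-- **Lemma 1 (Zador).** Let `X ⊂ ℝ^d` be a compact convex body of volume 1,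
let `z 0 = U, z 1, z 2, …` be i.i.d. points uniformly distributed on `X`, and
let `ρ(U, X_n) = min_{1 ≤ j ≤ n} ‖U - z j‖`. Then the cdf
`F_n(t) = Pr(n^{1/d} V_d^{1/d} ρ(U, X_n) ≤ t)` converges, uniformly in
`t ≥ 0`, to `F(t) = 1 - exp (-t^d)`, where `V_d = π^{d/2}/Γ(d/2+1)`. -/
theorem normalized_nearest_distance_tendsto_weibull
    {d : ℕ} (hd : 0 < d)
    (X : Set (EuclideanSpace ℝ (Fin d)))
    (hXc : IsCompact X) (hXconv : Convex ℝ X) (hXvol : volume X = 1)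
    {Ω : Type*} {mΩ : MeasurableSpace Ω} (P : Measure Ω) [IsProbabilityMeasure P]
    (z : ℕ → Ω → EuclideanSpace ℝ (Fin d)) (hmeas : ∀ j, Measurable (z j))
    (hindep : iIndepFun z P)
    (hlaw : ∀ j, Measure.map (z j) P = volume.restrict X)
    (Vd : ℝ) (hVd : Vd = Real.pi ^ ((d : ℝ) / 2) / Real.Gamma ((d : ℝ) / 2 + 1)) :
    TendstoUniformlyOn
      (fun (n : ℕ) (t : ℝ) =>
        (P {ω | (n : ℝ) ^ ((1 : ℝ) / d) * Vd ^ ((1 : ℝ) / d) *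
            (⨅ j : Fin n, dist (z 0 ω) (z ((j : ℕ) + 1) ω)) ≤ t}).toReal)
      (fun t => 1 - Real.exp (-(t ^ d)))
      atTop (Set.Ici 0) :=
  normalized_nearest_distance_tendsto_weibull_general hd X hXconv hXvol (mΩ := mΩ) P z hmeas hindep
    hlaw Vd hVd
end

section
/- Let U and X̃ be independent random vectors, each uniformly distributed on [0,1]^d, let r > 0 and n ≥ 1. Then E_U[ 1 − (1 − Pr_{X̃}{ ‖U − X̃‖ ≤ r | U })^n ] ≤ 1 − (1 − Pr_{X̃}{ ‖𝟙/2 − X̃‖ ≤ r })^n, where 𝟙/2 = (1/2, …, 1/2) is the center of the cube. -/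
/-!
Since `t ↦ 1 - (1 - t) ^ n` is monotone and the cube has volume one, it suffices to show that
`g` is largest at the centre. By Fubini along the `j`-th axis, `B(u, r) ∩ [0,1]^d` is sliced into
segments `[0,1] ∩ [u_j - ρ, u_j + ρ]`, where `ρ` depends only on the other coordinates, and such a
segment is longest when `u_j = 1/2`. Moving the coordinates of `u` to `1/2` one at a time therefore
never decreases the volume.
-/

open MeasureTheory Metric Set
open scoped ENNReal

lemma Real.setOf_sq_sub_le_eq_closedBall {u s : ℝ} (hs : 0 ≤ s) :
    {t : ℝ | (t - u) ^ 2 ≤ s} = closedBall u √s := by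
  ext t
  rw [mem_ofPred_eq, mem_closedBall, Real.dist_eq, ← Real.sqrt_sq_eq_abs, Real.sqrt_le_sqrt_iff hs]

lemma Real.volume_Icc_inter_closedBall_le_midpoint (a b u r : ℝ) :
    volume (Icc a b ∩ closedBall u r) ≤ volume (Icc a b ∩ closedBall ((a + b) / 2) r) := by
  simp only [Real.closedBall_eq_Icc, Icc_inter_Icc, Real.volume_Icc]
  gcongr ENNReal.ofReal ?_
  have := min_le_left b (u + r)
  have := min_le_right b (u + r)
  have := le_max_left a (u - r)
  have := le_max_right a (u - r)
  rcases le_total r ((b - a) / 2) with h | h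
  · rw [min_eq_right (show (a + b) / 2 + r ≤ b by linarith),
      max_eq_right (show a ≤ (a + b) / 2 - r by linarith)]
    linarith
  · rw [min_eq_left (show b ≤ (a + b) / 2 + r by linarith),
      max_eq_left (show (a + b) / 2 - r ≤ a by linarith)]
    linarith

lemma Real.volume_Icc_inter_sq_sub_le_le_midpoint (a b u s : ℝ) :
    volume (Icc a b ∩ {t | (t - u) ^ 2 ≤ s}) ≤
      volume (Icc a b ∩ {t | (t - (a + b) / 2) ^ 2 ≤ s}) := by
  rcases lt_or_ge s 0 with hs | hs
  · have : {t : ℝ | (t - u) ^ 2 ≤ s} = ∅ :=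
      eq_empty_of_forall_notMem fun t (ht : (t - u) ^ 2 ≤ s) => by nlinarith [sq_nonneg (t - u)]
    simp [this]
  · rw [Real.setOf_sq_sub_le_eq_closedBall hs, Real.setOf_sq_sub_le_eq_closedBall hs]
    exact Real.volume_Icc_inter_closedBall_le_midpoint a b u √s

lemma volume_eq_lintegral_volume_insertNth {m : ℕ} (j : Fin (m + 1))
    {s : Set (Fin (m + 1) → ℝ)} (hs : MeasurableSet s) :
    volume s = ∫⁻ y : Fin m → ℝ, volume {t : ℝ | j.insertNth t y ∈ s} := by
  let e := MeasurableEquiv.piFinSuccAbove (fun _ : Fin (m + 1) => ℝ) j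
  calc volume s = volume (e ⁻¹' (e.symm ⁻¹' s)) := congrArg _ (e.symm.symm_preimage_preimage s).symm
    _ = (volume : Measure ℝ).prod volume (e.symm ⁻¹' s) :=
      (volume_preserving_piFinSuccAbove _ j).measure_preimage_equiv _
    _ = _ := Measure.prod_apply_symm (e.symm.measurable hs)

def boxInterBall {ι : Type*} [Fintype ι] (a b v : ι → ℝ) (R : ℝ) : Set (ι → ℝ) :=
  univ.pi (fun i => Icc (a i) (b i)) ∩ {x | ∑ i, (x i - v i) ^ 2 ≤ R}

lemma measurableSet_boxInterBall {ι : Type*} [Fintype ι] (a b v : ι → ℝ) (R : ℝ) :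
    MeasurableSet (boxInterBall a b v R) :=
  (MeasurableSet.univ_pi fun _ => measurableSet_Icc).inter
    (measurableSet_le (by fun_prop) measurable_const)

lemma insertNth_mem_boxInterBall_iff {m : ℕ} {a b v : Fin (m + 1) → ℝ} {R : ℝ} {j : Fin (m + 1)}
    {t : ℝ} {y : Fin m → ℝ} :
    j.insertNth t y ∈ boxInterBall a b v R ↔
      (∀ i, y i ∈ Icc (a (j.succAbove i)) (b (j.succAbove i))) ∧ t ∈ Icc (a j) (b j) ∧
        (t - v j) ^ 2 ≤ R - ∑ i, (y i - v (j.succAbove i)) ^ 2 := by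
  simp only [boxInterBall, mem_inter_iff, mem_univ_pi, mem_ofPred_eq,
    Fin.forall_iff_succAbove j, Fin.sum_univ_succAbove _ j, Fin.insertNth_apply_same,
    Fin.insertNth_apply_succAbove, le_sub_iff_add_le]
  tauto

lemma volume_boxInterBall_le_update_midpoint {m : ℕ} (a b v : Fin (m + 1) → ℝ) (R : ℝ)
    (j : Fin (m + 1)) :
    volume (boxInterBall a b v R) ≤
      volume (boxInterBall a b (Function.update v j ((a j + b j) / 2)) R) := by
  rw [volume_eq_lintegral_volume_insertNth j (measurableSet_boxInterBall ..),
    volume_eq_lintegral_volume_insertNth j (measurableSet_boxInterBall ..)]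
  refine lintegral_mono fun y => ?_
  simp only [insertNth_mem_boxInterBall_iff, Function.update_self,
    Function.update_of_ne (Fin.succAbove_ne j _)]
  by_cases hy : ∀ i, y i ∈ Icc (a (j.succAbove i)) (b (j.succAbove i))
  · simp only [eq_true hy, true_and]
    exact Real.volume_Icc_inter_sq_sub_le_le_midpoint ..
  · simp only [hy, false_and, ofPred_false, le_refl]

lemma volume_boxInterBall_le_center {d : ℕ} (a b v : Fin d → ℝ) (R : ℝ) :
    volume (boxInterBall a b v R) ≤ volume (boxInterBall a b (fun i => (a i + b i) / 2) R) := by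
  classical
  rcases d with _ | m
  · rw [Subsingleton.elim v]
  suffices ∀ T : Finset (Fin (m + 1)), volume (boxInterBall a b v R) ≤
      volume (boxInterBall a b (T.piecewise (fun i => (a i + b i) / 2) v) R) by
    simpa using this Finset.univ
  intro T
  induction T using Finset.induction with
  | empty => simp
  | insert j T _ ih =>
    rw [Finset.piecewise_insert]
    exact ih.trans (volume_boxInterBall_le_update_midpoint ..)

lemma EuclideanSpace.preimage_toLp_closedBall {ι : Type*} [Fintype ι] (v : EuclideanSpace ℝ ι)
    {r : ℝ} (hr : 0 ≤ r) :
    WithLp.toLp 2 ⁻¹' closedBall v r = {x : ι → ℝ | ∑ i, (x i - v i) ^ 2 ≤ r ^ 2} := by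
  ext x
  simp only [mem_preimage, mem_closedBall, EuclideanSpace.dist_eq, Real.sqrt_le_left hr,
    Real.dist_eq, sq_abs, mem_ofPred_eq]

lemma EuclideanSpace.volume_preimage_toLp {ι : Type*} [Fintype ι] (s : Set (EuclideanSpace ℝ ι)) :
    volume (WithLp.toLp 2 ⁻¹' s) = volume s :=
  (EuclideanSpace.volume_preserving_symm_measurableEquiv_toLp ι).symm.measure_preimage_equiv s

theorem jensen_bound_center_general
    {d : ℕ} (r : ℝ) (hr : 0 < r) (n : ℕ)
    (cube : Set (EuclideanSpace ℝ (Fin d)))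
    (hcube : cube = {u : EuclideanSpace ℝ (Fin d) | ∀ i, u i ∈ Set.Icc (0 : ℝ) 1})
    (g : EuclideanSpace ℝ (Fin d) → ℝ≥0∞)
    (hg : ∀ u, g u = volume (closedBall u r ∩ cube))
    (c : EuclideanSpace ℝ (Fin d)) (hc : ∀ i, c i = 1 / 2) :
    ∫⁻ u in cube, (1 - (1 - g u) ^ n) ∂volume ≤ 1 - (1 - g c) ^ n := by
  have hcube_pi : WithLp.toLp 2 ⁻¹' cube = univ.pi fun _ => Icc 0 1 := by
    ext x
    simp only [hcube, mem_preimage, mem_ofPred_eq, mem_univ_pi]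
  have hg_box (u : EuclideanSpace ℝ (Fin d)) :
      g u = volume (boxInterBall 0 1 u.ofLp (r ^ 2)) := by
    rw [hg, ← EuclideanSpace.volume_preimage_toLp, preimage_inter, hcube_pi,
      EuclideanSpace.preimage_toLp_closedBall u hr.le, inter_comm]
    rfl
  have hc_mid : c.ofLp = fun _ => ((0 : ℝ) + 1) / 2 := by
    ext i
    simp [hc]
  have hg_le (u : EuclideanSpace ℝ (Fin d)) : g u ≤ g c := by
    rw [hg_box, hg_box, hc_mid]
    exact volume_boxInterBall_le_center 0 1 u.ofLp (r ^ 2)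
  have hcube_vol : volume cube = 1 := by
    rw [← EuclideanSpace.volume_preimage_toLp, hcube_pi, volume_pi_pi]
    simp
  calc ∫⁻ u in cube, (1 - (1 - g u) ^ n) ∂volume
      ≤ ∫⁻ _ in cube, (1 - (1 - g c) ^ n) ∂volume :=
        lintegral_mono fun u =>
          tsub_le_tsub_left (pow_le_pow_left' (tsub_le_tsub_left (hg_le u) 1) n) 1
    _ = 1 - (1 - g c) ^ n := by rw [setLIntegral_const, hcube_vol, mul_one]

/-- **First Jensen bound (eq. Jensen_naive).** Let
`g u = vol(B(u,r) ∩ [0,1]^d)`. Then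
`E_U[1 - (1 - g U)^n] ≤ 1 - (1 - g(1/2,…,1/2))^n` for `U` uniform on the
cube. -/
theorem jensen_bound_center
    {d : ℕ} (hd : 0 < d) (r : ℝ) (hr : 0 < r) (n : ℕ) (hn : 1 ≤ n)
    (cube : Set (EuclideanSpace ℝ (Fin d)))
    (hcube : cube = {u : EuclideanSpace ℝ (Fin d) | ∀ i, u i ∈ Set.Icc (0 : ℝ) 1})
    (g : EuclideanSpace ℝ (Fin d) → ℝ≥0∞)
    (hg : ∀ u, g u = volume (closedBall u r ∩ cube))
    (c : EuclideanSpace ℝ (Fin d)) (hc : ∀ i, c i = 1 / 2) :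
    ∫⁻ u in cube, (1 - (1 - g u) ^ n) ∂volume ≤ 1 - (1 - g c) ^ n :=
  jensen_bound_center_general r hr n cube hcube g hg c hc
end

section
/- Let U and X̃ be independent random vectors, each uniformly distributed on [0,1]^d, let r > 0 and n ≥ 1. Then E_U[ 1 − (1 − Pr_{X̃}{ ‖U − X̃‖ ≤ r | U })^n ] ≤ 1 − (1 − Pr_{X̃}{ ‖𝟛/4 − X̃‖ ≤ r })^n, where 𝟛/4 = (3/4, …, 3/4). -/
/-!
Since `t ↦ 1 - (1 - t) ^ n` is increasing and concave on `[0, 1]`, Jensen's inequality reduces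
the claim to `E g(U) ≤ g(c)`, i.e. `P(‖U - X̃‖² ≤ r²) ≤ P(‖c - X̃‖² ≤ r²)`. Both squared
distances are sums of `d` independent copies of a coordinate term, `(U_i - X̃_i)²` and
`(3/4 - X̃_i)²`, and the first term is stochastically larger than the second:
`P(|U_i - X̃_i| ≤ w) = 2w - w²`, while `P(|3/4 - X̃_i| ≤ w) = min (3/4 + w) 1 - max (3/4 - w) 0`.
Stochastic order passes to sums of independent terms by conditioning on one summand at a time.
-/

open MeasureTheory Metric Set
open scoped ENNReal

section Dominance

variable {α β γ : Type*} [MeasurableSpace α] [MeasurableSpace β] [MeasurableSpace γ]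
  {μ : Measure α} {ν : Measure β} {f : α → ℝ} {g : β → ℝ} {h : γ → ℝ}

theorem measure_prod_add_le_of_forall_le_right (ρ : Measure γ) [SFinite μ] [SFinite ν]
    (hh : Measurable h) (hf : Measurable f) (hg : Measurable g)
    (hfg : ∀ t, μ {a | f a ≤ t} ≤ ν {b | g b ≤ t}) (t : ℝ) :
    (ρ.prod μ) {p | h p.1 + f p.2 ≤ t} ≤ (ρ.prod ν) {p | h p.1 + g p.2 ≤ t} := by
  rw [Measure.prod_apply (measurableSet_le (by fun_prop) measurable_const),
    Measure.prod_apply (measurableSet_le (by fun_prop) measurable_const)]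
  refine lintegral_mono fun c => ?_
  simpa only [preimage_ofPred_eq, ← le_sub_iff_add_le'] using hfg (t - h c)

theorem measure_prod_add_le_of_forall_le_left (ρ : Measure γ) [SFinite ρ] [SFinite μ] [SFinite ν]
    (hh : Measurable h) (hf : Measurable f) (hg : Measurable g)
    (hfg : ∀ t, μ {a | f a ≤ t} ≤ ν {b | g b ≤ t}) (t : ℝ) :
    (μ.prod ρ) {p | f p.1 + h p.2 ≤ t} ≤ (ν.prod ρ) {p | g p.1 + h p.2 ≤ t} := by
  rw [Measure.prod_apply_symm (measurableSet_le (by fun_prop) measurable_const),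
    Measure.prod_apply_symm (measurableSet_le (by fun_prop) measurable_const)]
  refine lintegral_mono fun c => ?_
  simpa only [preimage_ofPred_eq, ← le_sub_iff_add_le] using hfg (t - h c)

theorem measure_pi_fin_succ_setOf_sum_le (μ : Measure α) [SigmaFinite μ] (f : α → ℝ) (d : ℕ)
    (t : ℝ) : Measure.pi (fun _ : Fin (d + 1) => μ) {x | ∑ i, f (x i) ≤ t} =
      (μ.prod (Measure.pi fun _ : Fin d => μ)) {p | f p.1 + ∑ j, f (p.2 j) ≤ t} := by
  rw [← (measurePreserving_piFinSuccAbove (fun _ => μ) 0).measure_preimage_equiv]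
  congr 1 with x
  simp [Fin.sum_univ_succ, Fin.tail]

theorem measure_pi_setOf_sum_le [SigmaFinite μ] [SigmaFinite ν] (hf : Measurable f)
    (hg : Measurable g) (hfg : ∀ t, μ {a | f a ≤ t} ≤ ν {b | g b ≤ t}) (d : ℕ) (t : ℝ) :
    Measure.pi (fun _ : Fin d => μ) {x | ∑ i, f (x i) ≤ t} ≤
      Measure.pi (fun _ : Fin d => ν) {y | ∑ i, g (y i) ≤ t} := by
  induction d generalizing t with
  | zero => by_cases ht : 0 ≤ t <;> simp [ht]
  | succ d ih =>
    have hsum_f : Measurable fun x : Fin d → α => ∑ j, f (x j) := by fun_prop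
    have hsum_g : Measurable fun y : Fin d → β => ∑ j, g (y j) := by fun_prop
    calc _ = (μ.prod (Measure.pi fun _ : Fin d => μ)) {p | f p.1 + ∑ j, f (p.2 j) ≤ t} :=
          measure_pi_fin_succ_setOf_sum_le μ f d t
      _ ≤ (μ.prod (Measure.pi fun _ : Fin d => ν)) {p | f p.1 + ∑ j, g (p.2 j) ≤ t} :=
          measure_prod_add_le_of_forall_le_right μ hf hsum_f hsum_g ih t
      _ ≤ (ν.prod (Measure.pi fun _ : Fin d => ν)) {p | g p.1 + ∑ j, g (p.2 j) ≤ t} :=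
          measure_prod_add_le_of_forall_le_left _ hsum_g hf hg hfg t
      _ = _ := (measure_pi_fin_succ_setOf_sum_le ν g d t).symm

end Dominance

noncomputable def uniformUnitInterval : Measure ℝ := volume.restrict (Icc 0 1)

instance : IsProbabilityMeasure uniformUnitInterval :=
  ⟨by simp [uniformUnitInterval]⟩

theorem uniformUnitInterval_Icc (a b : ℝ) :
    uniformUnitInterval (Icc a b) = ENNReal.ofReal (min b 1 - max a 0) := by
  rw [uniformUnitInterval, Measure.restrict_apply measurableSet_Icc, Icc_inter_Icc,
    Real.volume_Icc]

theorem setOf_sq_sub_le_sq (u : ℝ) {w : ℝ} (hw : 0 ≤ w) :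
    {b : ℝ | (u - b) ^ 2 ≤ w ^ 2} = Icc (u - w) (u + w) := by
  ext b
  rw [mem_ofPred_eq, sq_le_sq, abs_of_nonneg hw, abs_le, mem_Icc]
  constructor <;> rintro ⟨h₁, h₂⟩ <;> constructor <;> linarith

theorem integral_min_sub_max {w : ℝ} (hw₀ : 0 ≤ w) (hw₁ : w ≤ 1) :
    ∫ a in (0 : ℝ)..1, (min (a + w) 1 - max (a - w) 0) = 2 * w - w ^ 2 := by
  have hsplit : EqOn (fun a => min (a + w) 1 - max (a - w) 0)
      (fun a => min (1 - a) w + min a w) (uIcc 0 1) := by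
    intro a ha
    rw [uIcc_of_le zero_le_one] at ha
    simp only [min_def, max_def]
    split_ifs <;> linarith [ha.1, ha.2]
  have hmin : ∫ a in (0 : ℝ)..1, min a w = w - w ^ 2 / 2 := by
    have hcont : Continuous fun a : ℝ => min a w := by fun_prop
    rw [← intervalIntegral.integral_add_adjacent_intervals (hcont.intervalIntegrable 0 w)
      (hcont.intervalIntegrable w 1),
      intervalIntegral.integral_congr (g := fun a => a) fun a ha =>
        min_eq_left (uIcc_of_le hw₀ ▸ ha).2,
      intervalIntegral.integral_congr (g := fun _ => w) fun a ha =>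
        min_eq_right (uIcc_of_le hw₁ ▸ ha).1]
    rw [integral_id, intervalIntegral.integral_const, smul_eq_mul]
    ring
  have hsymm : ∫ a in (0 : ℝ)..1, min (1 - a) w = ∫ a in (0 : ℝ)..1, min a w := by
    simpa using intervalIntegral.integral_comp_sub_left (fun a => min a w) (a := 0) (b := 1) 1
  rw [intervalIntegral.integral_congr hsplit, intervalIntegral.integral_add
    ((by fun_prop : Continuous fun a : ℝ => min (1 - a) w).intervalIntegrable 0 1)
    ((by fun_prop : Continuous fun a : ℝ => min a w).intervalIntegrable 0 1), hsymm, hmin]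
  ring

theorem uniformUnitInterval_prod_setOf_sq_sub_le (t : ℝ) :
    (uniformUnitInterval.prod uniformUnitInterval) {p | (p.1 - p.2) ^ 2 ≤ t} ≤
      uniformUnitInterval {b | (3 / 4 - b) ^ 2 ≤ t} := by
  rcases lt_or_ge t 0 with ht | ht
  · have hempty : {p : ℝ × ℝ | (p.1 - p.2) ^ 2 ≤ t} = ∅ :=
      eq_empty_of_forall_notMem fun p hp => ((sq_nonneg _).trans hp).not_gt ht
    simp [hempty]
  obtain ⟨w, hw, rfl⟩ : ∃ w, 0 ≤ w ∧ w ^ 2 = t := ⟨√t, Real.sqrt_nonneg t, Real.sq_sqrt ht⟩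
  rw [setOf_sq_sub_le_sq _ hw, uniformUnitInterval_Icc]
  rcases lt_or_ge 1 w with hw₁ | hw₁
  · rw [min_eq_right (by linarith), max_eq_right (by linarith), sub_zero, ENNReal.ofReal_one]
    exact prob_le_one
  rw [Measure.prod_apply (measurableSet_le (by fun_prop) measurable_const)]
  simp_rw [preimage_ofPred_eq, setOf_sq_sub_le_sq _ hw, uniformUnitInterval_Icc]
  rw [uniformUnitInterval, ← ofReal_integral_eq_lintegral_ofReal, integral_Icc_eq_integral_Ioc,
    ← intervalIntegral.integral_of_le zero_le_one, integral_min_sub_max hw hw₁]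
  · -- the right side is `2w`, `w + 1/4` or `1`, and `w + 1/4 - (2w - w²) = (w - 1/2)²`
    refine ENNReal.ofReal_le_ofReal ?_
    rcases min_cases (3 / 4 + w) 1 with ⟨h, _⟩ | ⟨h, _⟩ <;>
      rcases max_cases (3 / 4 - w) 0 with ⟨h', _⟩ | ⟨h', _⟩ <;>
      rw [h, h'] <;> nlinarith [sq_nonneg (w - 1 / 2)]
  · exact (by fun_prop : Continuous fun a : ℝ => min (a + w) 1 - max (a - w) 0).integrableOn_Icc
  · filter_upwards [ae_restrict_mem measurableSet_Icc] with a ha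
    exact sub_nonneg.2 (max_le (le_min (by linarith [ha.2]) (by linarith [ha.2]))
      (le_min (by linarith [ha.1]) zero_le_one))

section UnitCube

variable {ι : Type*} [Fintype ι]

theorem restrict_univ_pi_Icc_eq_pi :
    (volume : Measure (ι → ℝ)).restrict (univ.pi fun _ => Icc 0 1) =
      Measure.pi fun _ => uniformUnitInterval := by
  rw [volume_pi, Measure.restrict_pi_pi]
  rfl

theorem setLIntegral_unitCube (F : (ι → ℝ) → ℝ≥0∞) :
    ∫⁻ u in {x : EuclideanSpace ℝ ι | ∀ i, x i ∈ Icc 0 1}, F u ∂volume =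
      ∫⁻ y, F y ∂(Measure.pi fun _ => uniformUnitInterval) := by
  rw [← restrict_univ_pi_Icc_eq_pi, ← (EuclideanSpace.volume_preserving_symm_measurableEquiv_toLp
    ι).setLIntegral_comp_preimage_emb (MeasurableEquiv.measurableEmbedding _)]
  congr 2 with x
  simp [Pi.le_def, forall_and]

instance : IsProbabilityMeasure (volume.restrict {x : EuclideanSpace ℝ ι | ∀ i, x i ∈ Icc 0 1}) :=
  ⟨by simpa using setLIntegral_unitCube (ι := ι) fun _ => 1⟩

theorem volume_closedBall_inter_unitCube (u : EuclideanSpace ℝ ι) {r : ℝ} (hr : 0 ≤ r) :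
    volume (closedBall u r ∩ {x | ∀ i, x i ∈ Icc 0 1}) =
      Measure.pi (fun _ => uniformUnitInterval) {y | ∑ i, (u i - y i) ^ 2 ≤ r ^ 2} := by
  have hmeas : MeasurableSet {y : ι → ℝ | ∑ i, (u i - y i) ^ 2 ≤ r ^ 2} :=
    measurableSet_le (by fun_prop) measurable_const
  rw [← restrict_univ_pi_Icc_eq_pi, Measure.restrict_apply hmeas,
    ← (EuclideanSpace.volume_preserving_symm_measurableEquiv_toLp ι).measure_preimage_equiv]
  congr 1 with x
  simp [EuclideanSpace.dist_eq, dist_comm x, Real.sqrt_le_left hr, Real.dist_eq, sq_abs, Pi.le_def,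
    forall_and]

end UnitCube

theorem measurable_measure_closedBall_inter {E : Type*} [MetricSpace E] [MeasurableSpace E]
    [BorelSpace E] [SecondCountableTopology E] (μ : Measure E) [SFinite μ] {s : Set E}
    (hs : MeasurableSet s) (r : ℝ) : Measurable fun u => μ (closedBall u r ∩ s) :=
  measurable_measure_prodMk_left (ν := μ) (s := {p : E × E | dist p.2 p.1 ≤ r} ∩ Prod.snd ⁻¹' s)
    ((measurableSet_le (measurable_snd.dist measurable_fst) measurable_const).inter
      (measurable_snd hs))

theorem lintegral_volume_closedBall_inter_unitCube_le {d : ℕ} {r : ℝ} (hr : 0 ≤ r)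
    (c : EuclideanSpace ℝ (Fin d)) (hc : ∀ i, c i = 3 / 4) :
    ∫⁻ u in {x : EuclideanSpace ℝ (Fin d) | ∀ i, x i ∈ Icc 0 1},
        volume (closedBall u r ∩ {x | ∀ i, x i ∈ Icc 0 1}) ∂volume ≤
      volume (closedBall c r ∩ {x | ∀ i, x i ∈ Icc 0 1}) := by
  have hmeas : MeasurableSet {p : (Fin d → ℝ) × (Fin d → ℝ) | ∑ i, (p.1 i - p.2 i) ^ 2 ≤ r ^ 2} :=
    measurableSet_le (by fun_prop) measurable_const
  simp_rw [volume_closedBall_inter_unitCube _ hr, hc]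
  rw [setLIntegral_unitCube fun x => Measure.pi (fun _ => uniformUnitInterval)
    {y | ∑ i, (x i - y i) ^ 2 ≤ r ^ 2}]
  calc _ = ((Measure.pi fun _ => uniformUnitInterval).prod
          (Measure.pi fun _ => uniformUnitInterval)) {p | ∑ i, (p.1 i - p.2 i) ^ 2 ≤ r ^ 2} :=
        (Measure.prod_apply hmeas).symm
    _ = Measure.pi (fun _ => uniformUnitInterval.prod uniformUnitInterval)
          {z | ∑ i, ((z i).1 - (z i).2) ^ 2 ≤ r ^ 2} :=
        ((measurePreserving_arrowProdEquivProdArrow ℝ ℝ (Fin d) _ _).measure_preimage_equiv _).symm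
    _ ≤ _ := measure_pi_setOf_sum_le (f := fun p : ℝ × ℝ => (p.1 - p.2) ^ 2)
          (g := fun b => (3 / 4 - b) ^ 2) (by fun_prop) (by fun_prop)
          uniformUnitInterval_prod_setOf_sq_sub_le d (r ^ 2)

section Jensen

variable {α : Type*} [MeasurableSpace α] (μ : Measure α) [IsProbabilityMeasure μ]
  {f : α → ℝ≥0∞}

theorem pow_lintegral_le_lintegral_pow (hf : AEMeasurable f μ) (n : ℕ) :
    (∫⁻ a, f a ∂μ) ^ n ≤ ∫⁻ a, f a ^ n ∂μ := by
  rcases n.eq_zero_or_pos with rfl | hn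
  · simp
  have h := eLpNorm'_le_eLpNorm'_of_exponent_le one_pos (Nat.one_le_cast.2 hn) μ
    hf.aestronglyMeasurable
  simp only [eLpNorm', enorm_eq_self, ENNReal.rpow_one, div_one, ENNReal.rpow_natCast, one_div] at h
  rwa [ENNReal.le_rpow_inv_iff (by positivity), ENNReal.rpow_natCast] at h

theorem lintegral_one_sub_one_sub_pow_le (hf : AEMeasurable f μ) (n : ℕ) :
    ∫⁻ a, (1 - (1 - f a) ^ n) ∂μ ≤ 1 - (1 - ∫⁻ a, f a ∂μ) ^ n := by
  have hle : ∀ a, (1 - f a) ^ n ≤ 1 := fun a => pow_le_one' tsub_le_self n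
  have hfin : ∫⁻ a, (1 - f a) ^ n ∂μ ≠ ∞ :=
    ne_top_of_le_ne_top ENNReal.one_ne_top ((lintegral_mono hle).trans_eq (by simp))
  rw [lintegral_sub' ((hf.const_sub 1).pow_const n) hfin (ae_of_all _ hle), lintegral_const,
    measure_univ, one_mul]
  gcongr
  calc (1 - ∫⁻ a, f a ∂μ) ^ n ≤ (∫⁻ a, (1 - f a) ∂μ) ^ n := by
        gcongr
        simpa using lintegral_sub_le' f (fun _ => 1) hf
    _ ≤ ∫⁻ a, (1 - f a) ^ n ∂μ := pow_lintegral_le_lintegral_pow μ (hf.const_sub 1) n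

end Jensen

theorem jensen_bound_three_quarters_general
    {d : ℕ} (r : ℝ) (hr : 0 < r) (n : ℕ)
    (cube : Set (EuclideanSpace ℝ (Fin d)))
    (hcube : cube = {u : EuclideanSpace ℝ (Fin d) | ∀ i, u i ∈ Set.Icc (0 : ℝ) 1})
    (g : EuclideanSpace ℝ (Fin d) → ℝ≥0∞)
    (hg : ∀ u, g u = volume (closedBall u r ∩ cube))
    (c : EuclideanSpace ℝ (Fin d)) (hc : ∀ i, c i = 3 / 4) :
    ∫⁻ u in cube, (1 - (1 - g u) ^ n) ∂volume ≤ 1 - (1 - g c) ^ n := by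
  subst hcube
  have hg_meas : Measurable g := funext hg ▸ measurable_measure_closedBall_inter volume
    (by measurability) r
  calc ∫⁻ u in _, (1 - (1 - g u) ^ n) ∂volume ≤ 1 - (1 - ∫⁻ u in _, g u ∂volume) ^ n :=
        lintegral_one_sub_one_sub_pow_le _ hg_meas.aemeasurable n
    _ ≤ 1 - (1 - g c) ^ n := by
        gcongr
        simpa only [hg] using lintegral_volume_closedBall_inter_unitCube_le hr.le c hc

/-- **Refined Jensen bound (eq. Jensen_main).** Let
`g u = vol(B(u,r) ∩ [0,1]^d)`. Then
`E_U[1 - (1 - g U)^n] ≤ 1 - (1 - g(3/4,…,3/4))^n` for `U` uniform on the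
cube. -/
theorem jensen_bound_three_quarters
    {d : ℕ} (hd : 0 < d) (r : ℝ) (hr : 0 < r) (n : ℕ) (hn : 1 ≤ n)
    (cube : Set (EuclideanSpace ℝ (Fin d)))
    (hcube : cube = {u : EuclideanSpace ℝ (Fin d) | ∀ i, u i ∈ Set.Icc (0 : ℝ) 1})
    (g : EuclideanSpace ℝ (Fin d) → ℝ≥0∞)
    (hg : ∀ u, g u = volume (closedBall u r ∩ cube))
    (c : EuclideanSpace ℝ (Fin d)) (hc : ∀ i, c i = 3 / 4) :
    ∫⁻ u in cube, (1 - (1 - g u) ^ n) ∂volume ≤ 1 - (1 - g c) ^ n :=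
  jensen_bound_three_quarters_general r hr n cube hcube g hg c hc
end
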